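/- A finite connected graph G is a tree if and only if, for some (equivalently, every) vertex s of G, there is exactly one s-rooted acyclic orientation of G. -/

import Mathlib

/-- An acyclic orientation of a simple graph: each edge gets exactly one direction,
and there are no directed cycles. -/
structure AcyclicOrientation {V : Type*} (G : SimpleGraph V) where
  dir : V → V → Prop
  adj_of_dir : ∀ a b, dir a b → G.Adj a b
  total : ∀ a b, G.Adj a b → dir a b ∨ dir b a
  asymm : ∀ a b, dir a b → ¬ dir b a
  acyclic : ∀ v, ¬ Relation.TransGen dir v v

/-- `s` is a target: all incident edges are directed towards `s`. -/
def AcyclicOrientation.IsTarget {V : Type*} {G : SimpleGraph V}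
    (o : AcyclicOrientation G) (s : V) : Prop :=
  ∀ a, G.Adj a s → o.dir a s

/-- `s` is a source: all incident edges are directed away from `s`. -/
def AcyclicOrientation.IsSource {V : Type*} {G : SimpleGraph V}
    (o : AcyclicOrientation G) (s : V) : Prop :=
  ∀ a, G.Adj s a → o.dir s a

/-- An `s`-rooted acyclic orientation: `s` is the unique target. -/
def AcyclicOrientation.IsRooted {V : Type*} {G : SimpleGraph V}
    (o : AcyclicOrientation G) (s : V) : Prop :=
  o.IsTarget s ∧ ∀ t, o.IsTarget t → t = s

/-- The number of `s`-rooted acyclic orientations of `G`. -/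
noncomputable def rootedCount {V : Type*} (G : SimpleGraph V) (s : V) : ℕ :=
  Nat.card {o : AcyclicOrientation G // o.IsRooted s}

/-!
Orient every edge downhill for an injective height function `f` in which `s` is lowest and every
other vertex has a lower neighbour: this gives an `s`-rooted acyclic orientation, and
`f v = (dist v s, label v)`, ordered lexicographically, is such a height.

If `G` has a cycle, its highest vertex `w` has two lower neighbours `x'`, `x` with `f x' < f x`;
lowering `w` to just below `x` keeps the height rooted at `s` but reverses the edge `wx`, so there
are two `s`-rooted orientations.

Conversely, in an `s`-rooted acyclic orientation every vertex has a directed walk to `s`, and a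
directed walk is a path. In a forest, paths are geodesics, so every edge points to the endpoint
nearer to `s`, and the orientation is unique.
-/

open Relation SimpleGraph

namespace SimpleGraph

variable {V : Type*} {G : SimpleGraph V}

theorem IsAcyclic.length_eq_dist (hG : G.IsAcyclic) {u v : V} {p : G.Walk u v} (hp : p.IsPath) :
    p.length = G.dist u v := by
  obtain ⟨q, hq, hql⟩ := p.reachable.exists_path_of_dist
  rw [← hql, Subtype.mk.inj (hG.subsingleton_path u v |>.elim ⟨p, hp⟩ ⟨q, hq⟩)]

theorem Connected.exists_adj_dist_lt (hG : G.Connected) {v s : V} (hv : v ≠ s) :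
    ∃ u, G.Adj v u ∧ G.dist u s < G.dist v s := by
  obtain ⟨p, -, hp⟩ := hG.exists_path_of_dist v s
  cases p with
  | nil => exact absurd rfl hv
  | cons hadj q =>
    refine ⟨_, hadj, ?_⟩
    have := dist_le q
    rw [Walk.length_cons] at hp
    omega

end SimpleGraph

namespace AcyclicOrientation

variable {V : Type*} {G : SimpleGraph V}

theorem ext {o o' : AcyclicOrientation G} (h : ∀ a b, o.dir a b ↔ o'.dir a b) : o = o' := by
  cases o; cases o'; congr; funext a b; exact propext (h a b)

def ofHeight {α : Type*} [LinearOrder α] (f : V → α) (hf : ∀ ⦃a b⦄, G.Adj a b → f a ≠ f b) :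
    AcyclicOrientation G where
  dir a b := G.Adj a b ∧ f b < f a
  adj_of_dir _ _ h := h.1
  total _ _ hab := (hf hab).lt_or_gt.symm.imp (⟨hab, ·⟩) (⟨hab.symm, ·⟩)
  asymm _ _ h h' := h.2.asymm h'.2
  acyclic v h := by
    have hv : TransGen (fun a b : α => b < a) (f v) (f v) := h.lift f fun _ _ h => h.2
    rw [transGen_eq_self] at hv
    exact lt_irrefl _ hv

variable {o o' : AcyclicOrientation G} {s : V}

theorem IsRooted.exists_dir (ho : o.IsRooted s) {v : V} (hv : v ≠ s) : ∃ u, o.dir v u := by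
  by_contra! h
  exact hv <| ho.2 v fun a ha => (o.total a v ha).resolve_right (h a)

theorem IsRooted.reflTransGen [Finite V] (ho : o.IsRooted s) (v : V) :
    ReflTransGen o.dir v s := by
  let reachedFrom : V → V → Prop := fun a b => TransGen o.dir b a
  have : IsTrans V reachedFrom := ⟨fun _ _ _ h h' => h'.trans h⟩
  have : Std.Irrefl reachedFrom := ⟨o.acyclic⟩
  induction v using (Finite.wellFounded_of_trans_of_irrefl reachedFrom).induction with
  | _ v ih =>
    by_cases hv : v = s
    · exact hv ▸ .refl
    obtain ⟨u, hvu⟩ := ho.exists_dir hv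
    exact .head hvu (ih u (.single hvu))

theorem exists_isPath_of_reflTransGen {u v : V} (h : ReflTransGen o.dir u v) :
    ∃ p : G.Walk u v, p.IsPath ∧ ∀ w ∈ p.support, ReflTransGen o.dir u w := by
  induction h using ReflTransGen.head_induction_on with
  | refl => exact ⟨.nil, .nil, fun w hw => List.mem_singleton.mp hw ▸ .refl⟩
  | @head a b hab _ ih =>
    obtain ⟨p, hp, hreach⟩ := ih
    -- the invariant on the support is what keeps `a` off the path
    refine ⟨.cons (o.adj_of_dir a b hab) p,
      hp.cons fun ha => o.acyclic a (.head' hab (hreach a ha)), fun w hw => ?_⟩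
    rcases List.mem_cons.mp (Walk.support_cons _ p ▸ hw) with rfl | hw
    · exact .refl
    · exact .head hab (hreach w hw)

theorem IsRooted.dist_eq_add_one [Finite V] (hG : G.IsAcyclic) (ho : o.IsRooted s) {a b : V}
    (hab : o.dir a b) : G.dist a s = G.dist b s + 1 := by
  obtain ⟨p, hp, hreach⟩ := exists_isPath_of_reflTransGen (ho.reflTransGen b)
  have ha : a ∉ p.support := fun ha => o.acyclic a (.head' hab (hreach a ha))
  rw [← hG.length_eq_dist hp, ← hG.length_eq_dist (hp.cons ha (h := o.adj_of_dir a b hab)),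
    Walk.length_cons]

theorem IsRooted.eq_of_isAcyclic [Finite V] (hG : G.IsAcyclic) (ho : o.IsRooted s)
    (ho' : o'.IsRooted s) : o = o' := by
  have dir_imp : ∀ {o o' : AcyclicOrientation G}, o.IsRooted s → o'.IsRooted s →
      ∀ a b, o.dir a b → o'.dir a b := by
    intro o o' ho ho' a b hab
    refine (o'.total a b (o.adj_of_dir a b hab)).resolve_right fun hba => ?_
    have := ho.dist_eq_add_one hG hab
    have := ho'.dist_eq_add_one hG hba
    omega
  exact ext fun a b => ⟨dir_imp ho ho' a b, dir_imp ho' ho a b⟩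

end AcyclicOrientation

namespace SimpleGraph

variable {V α : Type*} [LinearOrder α] {G : SimpleGraph V}

structure IsRootedHeight (G : SimpleGraph V) (f : V → α) (s : V) : Prop where
  injective : Function.Injective f
  le : ∀ v, f s ≤ f v
  exists_adj_lt : ∀ v, v ≠ s → ∃ u, G.Adj v u ∧ f u < f v

namespace IsRootedHeight

variable {f : V → α} {s : V}

theorem adj_ne (hf : IsRootedHeight G f s) : ∀ ⦃a b⦄, G.Adj a b → f a ≠ f b :=
  fun _ _ hab => hf.injective.ne hab.ne

theorem isRooted (hf : IsRootedHeight G f s) :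
    (AcyclicOrientation.ofHeight f hf.adj_ne).IsRooted s := by
  refine ⟨fun a ha => ⟨ha, (hf.le a).lt_of_ne (hf.adj_ne ha).symm⟩, fun t ht => ?_⟩
  by_contra hts
  obtain ⟨u, htu, hut⟩ := hf.exists_adj_lt t hts
  exact (ht u htu.symm).2.asymm hut

theorem lower [DecidableEq V] (hf : IsRootedHeight G f s) {w x' : V} {c : α} (hx' : G.Adj w x')
    (hx'c : f x' < c) (hcw : c < f w) :
    IsRootedHeight G (fun v => if v = w then toLex (c, 0) else toLex (f v, 1)) s := by
  have hsw : s ≠ w := by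
    rintro rfl
    exact (hf.le x').not_gt (hx'c.trans hcw)
  refine ⟨fun a b hab => ?_, fun v => ?_, fun v hv => ?_⟩
  · by_cases ha : a = w <;> by_cases hb : b = w <;> simp_all [hf.injective.eq_iff]
  · by_cases hv : v = w
    · simp [hv, hsw, Prod.Lex.toLex_le_toLex, (hf.le x').trans_lt hx'c]
    · simpa [hv, hsw, Prod.Lex.toLex_le_toLex] using (hf.le v).lt_or_eq
  · by_cases hvw : v = w
    · subst hvw
      exact ⟨x', hx', by simp [hx'.ne.symm, Prod.Lex.toLex_lt_toLex, hx'c]⟩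
    obtain ⟨u, hvu, hlt⟩ := hf.exists_adj_lt v hv
    refine ⟨u, hvu, ?_⟩
    by_cases huw : u = w
    · subst huw
      simp [hvw, Prod.Lex.toLex_lt_toLex, hcw.trans hlt]
    · simp [hvw, huw, Prod.Lex.toLex_lt_toLex, hlt]

theorem exists_isRooted_ne (hf : IsRootedHeight G f s) {w x x' : V} (hx : G.Adj w x)
    (hx' : G.Adj w x') (hxx' : x ≠ x') (hxw : f x < f w) (hx'w : f x' < f w) :
    ∃ o : AcyclicOrientation G,
      o.IsRooted s ∧ o ≠ AcyclicOrientation.ofHeight f hf.adj_ne := by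
  classical
  wlog hlt : f x' < f x generalizing x x'
  · exact this hx' hx hxx'.symm hx'w hxw ((hf.injective.ne hxx').lt_or_gt.resolve_right hlt)
  have hg := hf.lower hx' hlt hxw
  refine ⟨_, hg.isRooted, fun heq => ?_⟩
  have hwx : (AcyclicOrientation.ofHeight f hf.adj_ne).dir w x := ⟨hx, hxw⟩
  rw [← heq] at hwx
  simpa [hx.ne.symm, Prod.Lex.toLex_lt_toLex] using hwx.2

end IsRootedHeight

theorem Connected.exists_isRootedHeight [Finite V] (hG : G.Connected) (s : V) :
    ∃ f : V → ℕ ×ₗ ℕ, IsRootedHeight G f s := by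
  obtain ⟨label, hlabel⟩ := Countable.exists_injective_nat V
  refine ⟨fun v => toLex (G.dist v s, label v), fun a b hab => hlabel (Prod.ext_iff.mp hab).2,
    fun v => ?_, fun v hv => ?_⟩
  · rcases eq_or_ne v s with rfl | hv
    · exact le_rfl
    · simp [Prod.Lex.toLex_le_toLex, hG.pos_dist_of_ne hv]
  · obtain ⟨u, hvu, hlt⟩ := hG.exists_adj_dist_lt hv
    exact ⟨u, hvu, by simp [Prod.Lex.toLex_lt_toLex, hlt]⟩

theorem exists_adj_adj_lt_lt_of_not_isAcyclic (hG : ¬ G.IsAcyclic) {f : V → α}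
    (hf : ∀ ⦃a b⦄, G.Adj a b → f a ≠ f b) :
    ∃ w x x', x ≠ x' ∧ G.Adj w x ∧ G.Adj w x' ∧ f x < f w ∧ f x' < f w := by
  classical
  obtain ⟨v, c, hc⟩ : ∃ v, ∃ c : G.Walk v v, c.IsCycle := by simpa [IsAcyclic] using hG
  obtain ⟨w, hw, hmax⟩ := c.support.toFinset.exists_max_image f ⟨v, by simp⟩
  rw [List.mem_toFinset] at hw
  obtain ⟨x, x', hxx', hnbrs⟩ :=
    Set.ncard_eq_two.mp (hc.ncard_neighborSet_toSubgraph_eq_two hw)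
  have lower : ∀ y ∈ c.toSubgraph.neighborSet w, G.Adj w y ∧ f y < f w := fun y hy =>
    ⟨c.toSubgraph.adj_sub hy, (hmax y (List.mem_toFinset.mpr
      (c.mem_support_of_adj_toSubgraph hy.symm))).lt_of_ne (hf (c.toSubgraph.adj_sub hy)).symm⟩
  obtain ⟨hx, hxw⟩ := lower x (by simp [hnbrs])
  obtain ⟨hx', hx'w⟩ := lower x' (by simp [hnbrs])
  exact ⟨w, x, x', hxx', hx, hx', hxw, hx'w⟩

theorem Connected.rootedCount_eq_one_iff_isTree [Finite V] (hG : G.Connected) (s : V) :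
    rootedCount G s = 1 ↔ G.IsTree := by
  obtain ⟨f, hf⟩ := hG.exists_isRootedHeight s
  rw [rootedCount, Nat.card_eq_one_iff_unique]
  refine ⟨fun ⟨hunique, _⟩ => ⟨hG, ?_⟩, fun hT =>
    ⟨⟨fun o o' => Subtype.ext (o.2.eq_of_isAcyclic hT.isAcyclic o'.2)⟩, ⟨⟨_, hf.isRooted⟩⟩⟩⟩
  by_contra hcyc
  obtain ⟨w, x, x', hxx', hx, hx', hxw, hx'w⟩ :=
    exists_adj_adj_lt_lt_of_not_isAcyclic hcyc hf.adj_ne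
  obtain ⟨o, ho, hne⟩ := hf.exists_isRooted_ne hx hx' hxx' hxw hx'w
  exact hne (congrArg Subtype.val (hunique.elim ⟨o, ho⟩ ⟨_, hf.isRooted⟩))

end SimpleGraph

/-- A finite connected graph is a tree iff for some (equivalently, every) vertex `s`
it has exactly one `s`-rooted acyclic orientation. -/
theorem isTree_iff_rootedCount_eq_one {V : Type*} [Finite V] (G : SimpleGraph V)
    (hG : G.Connected) :
    (G.IsTree ↔ ∀ s : V, rootedCount G s = 1) ∧
    (G.IsTree ↔ ∃ s : V, rootedCount G s = 1) := by
  have := hG.nonempty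
  simp [hG.rootedCount_eq_one_iff_isTree]
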